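/- arXiv:2403.05611 — 2 statements merged into one kernel-verified Lean document; each statement's English description precedes it below -/
import Mathlib

section
/- Let G be a connected (P_5, claw)-free graph and c a fixed integer. If χ(G) ≤ c, then the order of G is bounded by a function of c only. -/
open SimpleGraph

/-- `G` contains no induced subgraph isomorphic to `H`. -/
def HFree {W V : Type*} (H : SimpleGraph W) (G : SimpleGraph V) : Prop :=
  IsEmpty (H ↪g G)

/-- `G` is `k`-vertex-critical: `χ(G) = k` and deleting any vertex decreases
the chromatic number below `k`. -/
def IsKVertexCritical {V : Type*} (G : SimpleGraph V) (k : ℕ) : Prop :=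
  G.chromaticNumber = k ∧ ∀ v : V, (G.induce {v}ᶜ).chromaticNumber < k

/-- The star `K_{1,s}`: center `0`, leaves `1, …, s`. -/
def starGraph (s : ℕ) : SimpleGraph (Fin (s + 1)) :=
  SimpleGraph.fromRel (fun i _ => (i : ℕ) = 0)

/-- `K_{1,s} + P_1`: the disjoint union of the star `K_{1,s}`
(center `0`, leaves `1, …, s`) and the isolated vertex `s + 1`. -/
def starPlusP1 (s : ℕ) : SimpleGraph (Fin (s + 2)) :=
  SimpleGraph.fromRel (fun i j => (i : ℕ) = 0 ∧ (j : ℕ) ≠ 0 ∧ (j : ℕ) ≤ s)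

/-- The complement of `K_3 + 2P_1`: vertices `0,1,2` pairwise nonadjacent,
vertices `3,4` adjacent to everything else. -/
def coK3Plus2P1 : SimpleGraph (Fin 5) :=
  SimpleGraph.fromRel (fun i j => 3 ≤ (i : ℕ) ∨ 3 ≤ (j : ℕ))

/-!
A shortest path between two vertices is an induced path, so in a connected `P₅`-free graph any
two vertices are at distance at most `3`. In a claw-free graph the neighbourhood of a vertex
contains no independent set of size `3`, so it meets each colour class of a proper `c`-colouring
in at most two vertices and every degree is at most `2c`. Counting vertices by their distance
from a fixed vertex then gives at most `(2c + 1)³` vertices.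
-/

open Finset

lemma starGraph_adj {s : ℕ} {i j : Fin (s + 1)} :
    (_root_.starGraph s).Adj i j ↔ i ≠ j ∧ (i = 0 ∨ j = 0) := by
  simp [_root_.starGraph, Fin.val_eq_zero_iff]

namespace SimpleGraph

variable {V : Type*} {G : SimpleGraph V}

lemma IsNIndepSet.not_hFree_starGraph {s : ℕ} {t : Finset V} {v : V}
    (ht : G.IsNIndepSet s t) (hvt : ∀ w ∈ t, G.Adj v w) : ¬HFree (_root_.starGraph s) G := by
  intro hfree
  let e : Fin s ≃ t := (t.equivFinOfCardEq ht.card_eq).symm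
  have hleaf (i : Fin s) : G.Adj v (e i) := hvt _ (e i).2
  have hindep {i j : Fin s} (hij : i ≠ j) : ¬G.Adj (e i) (e j) :=
    ht.isIndepSet (e i).2 (e j).2 (by simpa [Subtype.val_inj] using hij)
  let f : Fin (s + 1) → V := Fin.cons v (fun i => e i)
  have hinj : f.Injective := by
    intro i j hij
    induction i using Fin.cases <;> induction j using Fin.cases <;>
      simp_all [f, (hleaf _).ne, (hleaf _).ne']
  refine hfree.false ⟨⟨f, hinj⟩, fun {i j} => ?_⟩
  simp only [Function.Embedding.coeFn_mk, _root_.starGraph_adj]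
  induction i using Fin.cases <;> induction j using Fin.cases
  case zero.zero => simp
  case zero.succ j => simpa [f, (Fin.succ_ne_zero j).symm] using hleaf j
  case succ.zero i => simpa [f] using (hleaf i).symm
  case succ.succ i j =>
    simp only [f, Fin.cons_succ, ne_eq, Fin.succ_inj, Fin.succ_ne_zero, or_self, and_false,
      iff_false]
    by_cases hij : i = j
    · simp [hij]
    · exact hindep hij

lemma degree_le_mul_of_hFree_starGraph [Fintype V] [DecidableRel G.Adj] {s c : ℕ}
    (hfree : HFree (_root_.starGraph (s + 1)) G) (C : G.Coloring (Fin c)) (v : V) :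
    G.degree v ≤ s * c := by
  by_contra! h
  obtain ⟨y, -, hy⟩ := exists_lt_card_fiber_of_mul_lt_card_of_maps_to
    (s := G.neighborFinset v) (t := univ) (f := C) (n := s) (fun _ _ => mem_univ _)
    (by simpa [mul_comm] using h)
  obtain ⟨t, hts, htcard⟩ := exists_subset_card_eq hy
  refine (IsNIndepSet.not_hFree_starGraph (v := v) ⟨?_, htcard⟩ fun w hw => ?_) hfree
  · refine (C.isIndepSet_colorClass y).mono fun w hw => ?_
    exact (mem_filter.mp (hts hw)).2
  · exact (G.mem_neighborFinset v w).mp (mem_filter.mp (hts hw)).1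

lemma Walk.dist_getVert_getVert_of_length_eq_dist {u v : V} {p : G.Walk u v}
    (hp : p.length = G.dist u v) {i j : ℕ} (hij : i ≤ j) (hj : j ≤ p.length) :
    G.dist (p.getVert i) (p.getVert j) = j - i := by
  have hsub := (p.drop i).isSubwalk_take (j - i) |>.trans (p.isSubwalk_drop i)
  have := length_eq_dist_of_subwalk hp hsub
  rw [take_length, drop_length, drop_getVert, Nat.add_sub_cancel' hij] at this
  omega

lemma dist_le_of_hFree_pathGraph {n : ℕ} (hfree : HFree (pathGraph (n + 2)) G) (u v : V) :
    G.dist u v ≤ n := by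
  by_contra! hlt
  have hreach : G.Reachable u v := Reachable.of_dist_ne_zero (by omega)
  obtain ⟨p, hp⟩ := hreach.exists_walk_length_eq_dist
  let f : Fin (n + 2) → V := fun i => p.getVert i
  have hdist (i j : Fin (n + 2)) : G.dist (f i) (f j) = (i - j : ℕ) + (j - i : ℕ) := by
    rcases le_total i j with hij | hij
    · rw [p.dist_getVert_getVert_of_length_eq_dist hp hij (by omega)]
      omega
    · rw [dist_comm, p.dist_getVert_getVert_of_length_eq_dist hp hij (by omega)]
      omega
  have hinj : f.Injective := fun i j hij => by
    have := hdist i j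
    rw [hij, dist_self] at this
    omega
  refine hfree.false ⟨⟨f, hinj⟩, fun {i j} => ?_⟩
  rw [Function.Embedding.coeFn_mk, ← dist_eq_one_iff_adj, hdist, pathGraph_adj]
  omega

lemma exists_adj_dist_le_of_dist_eq_succ {u w : V} {k : ℕ} (h : G.dist u w = k + 1) :
    ∃ x, G.Adj x w ∧ G.dist u x ≤ k := by
  have hreach : G.Reachable w u := (Reachable.of_dist_ne_zero (by omega)).symm
  obtain ⟨p, hp⟩ := hreach.exists_walk_length_eq_dist
  rw [dist_comm, h] at hp
  cases p with
  | nil => simp at hp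
  | cons hadj q =>
    refine ⟨_, hadj.symm, ?_⟩
    rw [dist_comm]
    have := dist_le q
    simp only [Walk.length_cons] at hp
    omega

lemma Connected.card_filter_dist_le_le_pow [Fintype V] [DecidableEq V] [DecidableRel G.Adj]
    (hconn : G.Connected) {d : ℕ} (hdeg : ∀ v, G.degree v ≤ d) (u : V) (k : ℕ) :
    #{v | G.dist u v ≤ k} ≤ (d + 1) ^ k := by
  induction k with
  | zero => simp [hconn.dist_eq_zero_iff, filter_eq]
  | succ k ih =>
    have hsub : ({v | G.dist u v ≤ k + 1} : Finset V) ⊆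
        ({v | G.dist u v ≤ k} : Finset V).biUnion fun x => insert x (G.neighborFinset x) := by
      intro w hw
      simp only [mem_filter, mem_univ, true_and] at hw
      simp only [mem_biUnion, mem_filter, mem_univ, true_and, mem_insert, mem_neighborFinset]
      rcases hw.lt_or_eq with hlt | heq
      · exact ⟨w, by omega, .inl rfl⟩
      · obtain ⟨x, hadj, hx⟩ := exists_adj_dist_le_of_dist_eq_succ heq
        exact ⟨x, hx, .inr hadj⟩
    calc #{v | G.dist u v ≤ k + 1}
        ≤ #{v | G.dist u v ≤ k} * (d + 1) := by
          refine (card_le_card hsub).trans (card_biUnion_le_card_mul _ _ _ fun x _ => ?_)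
          exact (card_insert_le _ _).trans (by simpa using hdeg x)
      _ ≤ (d + 1) ^ k * (d + 1) := Nat.mul_le_mul_right _ ih
      _ = (d + 1) ^ (k + 1) := (pow_succ _ _).symm

lemma Connected.card_le_pow [Fintype V] [DecidableRel G.Adj] (hconn : G.Connected) {d k : ℕ}
    (hdeg : ∀ v, G.degree v ≤ d) (u : V) (hdist : ∀ v, G.dist u v ≤ k) :
    Fintype.card V ≤ (d + 1) ^ k := by
  classical
  calc Fintype.card V = #{v | G.dist u v ≤ k} := by simp [hdist]
    _ ≤ (d + 1) ^ k := hconn.card_filter_dist_le_le_pow hdeg u k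

end SimpleGraph

theorem stmt6 : ∃ B : ℕ → ℕ,
    ∀ (c : ℕ) (V : Type) [Fintype V] (G : SimpleGraph V),
      G.Connected → HFree (pathGraph 5) G → HFree (_root_.starGraph 3) G →
      G.chromaticNumber ≤ (c : ℕ∞) → Fintype.card V ≤ B c := by
  classical
  refine ⟨fun c => (2 * c + 1) ^ 3, fun c V _ G hconn hP5 hclaw hχ => ?_⟩
  obtain ⟨C⟩ := chromaticNumber_le_iff_colorable.mp hχ
  obtain ⟨u⟩ := hconn.nonempty
  exact hconn.card_le_pow (fun v => degree_le_mul_of_hFree_starGraph hclaw C v) u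
    (dist_le_of_hFree_pathGraph hP5 u)
end

section
/- Let G be a P_5-free graph containing an induced antihole C = complement of C_{2t+1} (t ≥ 2). Let S_0 be the set of vertices with no neighbor on C, and for 1 ≤ m ≤ 2t let S_m be the set of vertices with exactly m neighbors on C. Then for every connected component A of G[S_0], each vertex of S_1 ∪ ... ∪ S_{2t} is either complete or anticomplete to A. -/
open SimpleGraph

namespace SimpleGraph

variable {V W : Type*}

theorem Preconnected.exists_adj_mem_notMem {G : SimpleGraph V} (hG : G.Preconnected)
    {S : Set V} {u v : V} (hu : u ∈ S) (hv : v ∉ S) : ∃ a b, G.Adj a b ∧ a ∈ S ∧ b ∉ S := by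
  obtain ⟨p⟩ := hG u v
  obtain ⟨d, -, hd⟩ := p.exists_boundary_dart S hu hv
  exact ⟨d.fst, d.snd, d.adj, hd⟩

theorem preconnected_compl_of_degree_le [Fintype V] (H : SimpleGraph V) [DecidableRel H.Adj]
    {d : ℕ} (hdeg : ∀ v, H.degree v ≤ d) (hcard : 2 * d < Fintype.card V) :
    Hᶜ.Preconnected := by
  classical
  intro u v
  by_cases huv : u = v
  · exact huv ▸ Reachable.refl u
  by_cases hc : Hᶜ.Adj u v
  · exact hc.reachable
  have hH : H.Adj u v := by simpa [compl_adj, huv] using hc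
  -- a common `Hᶜ`-neighbour lies outside the two `H`-neighbourhoods, which contain `u` and `v`
  have hlt : (H.neighborFinset u ∪ H.neighborFinset v).card < (Finset.univ : Finset V).card := by
    calc _ ≤ H.degree u + H.degree v := Finset.card_union_le _ _
      _ < _ := by have := hdeg u; have := hdeg v; rw [Finset.card_univ]; omega
  obtain ⟨w, -, hw⟩ := Finset.exists_mem_notMem_of_card_lt_card hlt
  simp only [Finset.mem_union, mem_neighborFinset, not_or] at hw
  have huw : Hᶜ.Adj u w := (H.compl_adj u w).2 ⟨fun h => hw.2 (h ▸ hH.symm), hw.1⟩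
  have hvw : Hᶜ.Adj v w := (H.compl_adj v w).2 ⟨fun h => hw.1 (h ▸ hH), hw.2⟩
  exact huw.reachable.trans hvw.reachable.symm

theorem preconnected_compl_cycleGraph {n : ℕ} (hn : 5 ≤ n) : (cycleGraph n)ᶜ.Preconnected := by
  obtain ⟨m, rfl⟩ : ∃ m, n = m + 2 := ⟨n - 2, by omega⟩
  refine preconnected_compl_of_degree_le _ (d := 2) (fun v => ?_) (by simp; omega)
  rw [cycleGraph_degree_two_le]
  exact Finset.card_le_two

def Embedding.ofAdjIff {G : SimpleGraph V} {H : SimpleGraph W} (φ : W → V)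
    (hH : Function.Injective H.neighborSet) (hφ : ∀ i j, G.Adj (φ i) (φ j) ↔ H.Adj i j) :
    H ↪g G :=
  ⟨⟨φ, fun i j h => hH <| Set.ext fun k => by simp only [mem_neighborSet, ← hφ, h]⟩,
    hφ _ _⟩

theorem pathGraph_five_neighborSet_injective : Function.Injective (pathGraph 5).neighborSet := by
  intro i j h
  have key : ∀ i j : Fin 5, (∀ k, (pathGraph 5).Adj i k ↔ (pathGraph 5).Adj j k) → i = j := by
    simp only [pathGraph_adj]; decide
  exact key i j fun k => by rw [← mem_neighborSet, h, mem_neighborSet]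

def Embedding.pathGraphFive {G : SimpleGraph V} {v₀ v₁ v₂ v₃ v₄ : V}
    (h₀₁ : G.Adj v₀ v₁) (h₁₂ : G.Adj v₁ v₂) (h₂₃ : G.Adj v₂ v₃) (h₃₄ : G.Adj v₃ v₄)
    (h₀₂ : ¬G.Adj v₀ v₂) (h₀₃ : ¬G.Adj v₀ v₃) (h₀₄ : ¬G.Adj v₀ v₄)
    (h₁₃ : ¬G.Adj v₁ v₃) (h₁₄ : ¬G.Adj v₁ v₄) (h₂₄ : ¬G.Adj v₂ v₄) : pathGraph 5 ↪g G :=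
  ofAdjIff ![v₀, v₁, v₂, v₃, v₄] pathGraph_five_neighborSet_injective fun i j => by
    fin_cases i <;> fin_cases j <;>
      simp [pathGraph_adj, G.adj_comm v₁ v₀, G.adj_comm v₂ v₁, G.adj_comm v₃ v₂,
        G.adj_comm v₄ v₃, G.adj_comm v₂ v₀, G.adj_comm v₃ v₀, G.adj_comm v₄ v₀,
        G.adj_comm v₃ v₁, G.adj_comm v₄ v₁, G.adj_comm v₄ v₂, *]

end SimpleGraph

theorem stmt10_general {V : Type*} (G : SimpleGraph V) (hP5 : HFree (pathGraph 5) G)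
    (t : ℕ) (ht : 2 ≤ t) (f : ((cycleGraph (2 * t + 1))ᶜ) ↪g G)
    (S0 : Set V) (hS0 : S0 = {x | x ∉ Set.range f ∧ ∀ i, ¬ G.Adj x (f i)})
    (A : Set V) (hAS : A ⊆ S0) (hconn : (G.induce A).Connected) :
    ∀ x : V, x ∉ Set.range f →
      1 ≤ {i : Fin (2 * t + 1) | G.Adj x (f i)}.ncard →
      {i : Fin (2 * t + 1) | G.Adj x (f i)}.ncard ≤ 2 * t →
      (∀ a ∈ A, G.Adj x a) ∨ (∀ a ∈ A, ¬ G.Adj x a) := by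
  intro x _ hsome hnotall
  by_contra! hmixed
  obtain ⟨⟨b₀, hb₀, hxb₀⟩, a₀, ha₀, hxa₀⟩ := hmixed
  obtain ⟨a, b, hab, hxa, hxb⟩ := hconn.preconnected.exists_adj_mem_notMem
    (S := {v : A | G.Adj x v}) (u := ⟨a₀, ha₀⟩) (v := ⟨b₀, hb₀⟩) hxa₀ hxb₀
  set N := {i : Fin (2 * t + 1) | G.Adj x (f i)}
  obtain ⟨i₀, hi₀⟩ : N.Nonempty := Set.nonempty_of_ncard_ne_zero (by omega)
  obtain ⟨j₀, hj₀⟩ : ∃ j, j ∉ N := by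
    by_contra! hall
    rw [Set.eq_univ_of_forall hall, Set.ncard_univ, Nat.card_eq_fintype_card,
      Fintype.card_fin] at hnotall
    omega
  obtain ⟨i, j, hij, hxi, hxj⟩ :=
    (preconnected_compl_cycleGraph (by omega)).exists_adj_mem_notMem hi₀ hj₀
  subst hS0
  obtain ⟨-, ha⟩ := hAS a.2
  obtain ⟨-, hb⟩ := hAS b.2
  exact hP5.false <| Embedding.pathGraphFive hab.symm hxa.symm hxi (f.map_adj_iff.2 hij)
    (fun h => hxb h.symm) (hb i) (hb j) (ha i) (ha j) hxj

theorem stmt10 {V : Type*} (G : SimpleGraph V) (hP5 : HFree (pathGraph 5) G)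
    (t : ℕ) (ht : 2 ≤ t) (f : ((cycleGraph (2 * t + 1))ᶜ) ↪g G)
    (S0 : Set V) (hS0 : S0 = {x | x ∉ Set.range f ∧ ∀ i, ¬ G.Adj x (f i)})
    (A : Set V) (hAS : A ⊆ S0) (hne : A.Nonempty) (hconn : (G.induce A).Connected)
    (hcomp : ∀ a ∈ A, ∀ s ∈ S0 \ A, ¬ G.Adj a s) :
    ∀ x : V, x ∉ Set.range f →
      1 ≤ {i : Fin (2 * t + 1) | G.Adj x (f i)}.ncard →
      {i : Fin (2 * t + 1) | G.Adj x (f i)}.ncard ≤ 2 * t →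
      (∀ a ∈ A, G.Adj x a) ∨ (∀ a ∈ A, ¬ G.Adj x a) :=
  stmt10_general G hP5 t ht f S0 hS0 A hAS hconn
end
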